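/- (Graphical straightening algorithm.) Fix w ∈ ℕⁿ. Every X_Γ with Γ a directed graph on {1,…,n} of multidegree w is a ℤ-linear combination of the polynomials X_Δ, where Δ ranges over non-crossing directed graphs on {1,…,n} of multidegree w. In other words, the non-crossing variables of multidegree w generate, as an abelian group, the subgroup of ℤ[u_1,…,u_n,v_1,…,v_n] generated by all X_Γ of multidegree w. -/

import Mathlib

open MvPolynomial

/-- A directed multigraph on the vertex set `Fin n`: a multiset of ordered pairs
(multiple edges allowed). -/
abbrev DGraph (n : ℕ) := Multiset (Fin n × Fin n)

/-- `Γ` has no loops. -/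
def DGraph.loopless {n : ℕ} (Γ : DGraph n) : Prop := ∀ e ∈ Γ, e.1 ≠ e.2

/-- The multidegree (valence) of `Γ` at the vertex `v`: the number of edges of `Γ`
incident to `v`, counted with multiplicity. -/
def DGraph.mdeg {n : ℕ} (Γ : DGraph n) (v : Fin n) : ℕ :=
  Multiset.countP (fun e => e.1 = v) Γ + Multiset.countP (fun e => e.2 = v) Γ

/-- A perfect matching on `{1,…,n}`: a directed graph of multidegree `(1,…,1)`.
(Multidegree one everywhere forces looplessness.) -/
def DGraph.isPM {n : ℕ} (Γ : DGraph n) : Prop := ∀ v, Γ.mdeg v = 1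

/-- The invariant `X_Γ = ∏_{(i,j) ∈ Γ} (u_j v_i - u_i v_j)`, where the variable
`Sum.inl i` plays the role of `u_i` and `Sum.inr i` plays the role of `v_i`. -/
noncomputable def XG {n : ℕ} (Γ : DGraph n) : MvPolynomial (Fin n ⊕ Fin n) ℤ :=
  (Γ.map (fun e => X (Sum.inl e.2) * X (Sum.inr e.1) - X (Sum.inl e.1) * X (Sum.inr e.2))).prod

/-- Two edges with underlying vertex pairs `{a,b}` (`a<b`) and `{c,d}` (`c<d`) cross iff
`a<c<b<d` or `c<a<d<b`.  (Edges sharing a vertex never cross.) -/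
def Crosses {n : ℕ} (e f : Fin n × Fin n) : Prop :=
  (min e.1 e.2 < min f.1 f.2 ∧ min f.1 f.2 < max e.1 e.2 ∧ max e.1 e.2 < max f.1 f.2) ∨
  (min f.1 f.2 < min e.1 e.2 ∧ min e.1 e.2 < max f.1 f.2 ∧ max f.1 f.2 < max e.1 e.2)

/-- A graph is non-crossing if no two of its edges cross. -/
def Noncrossing {n : ℕ} (Γ : DGraph n) : Prop := ∀ e ∈ Γ, ∀ f ∈ Γ, ¬ Crosses e f

/-!
Each `X_e = u_j v_i - u_i v_j` is a `2 × 2` minor, so for any four vertices the three-term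
Plücker relation `X_{ac} X_{bd} = X_{ab} X_{cd} + X_{ad} X_{bc}` holds. If `a < b < c < d` and
`{a,c}`, `{b,d}` is a crossing pair of edges, the relation rewrites `X_Γ` (up to sign) as a sum of
two `X_Δ`'s in which that pair is replaced by the non-crossing pair `{a,b}, {c,d}` resp.
`{a,d}, {b,c}`; the multidegree is unchanged. Weighting an edge of span `ℓ` by the strictly
concave `ℓ (n - ℓ)`, both replacements strictly lower the total weight, so the rewriting
terminates in non-crossing graphs.
-/

noncomputable def edgePoly {n : ℕ} (e : Fin n × Fin n) : MvPolynomial (Fin n ⊕ Fin n) ℤ :=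
  X (Sum.inl e.2) * X (Sum.inr e.1) - X (Sum.inl e.1) * X (Sum.inr e.2)

lemma XG_cons {n : ℕ} (e : Fin n × Fin n) (Γ : DGraph n) :
    XG (e ::ₘ Γ) = edgePoly e * XG Γ := by
  simp [XG, edgePoly]

lemma edgePoly_plucker {n : ℕ} (a b c d : Fin n) :
    edgePoly (a, c) * edgePoly (b, d) =
      edgePoly (a, b) * edgePoly (c, d) + edgePoly (a, d) * edgePoly (b, c) := by
  simp only [edgePoly]
  ring

lemma edgePoly_min_max {n : ℕ} (e : Fin n × Fin n) :
    edgePoly (min e.1 e.2, max e.1 e.2) = edgePoly e ∨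
      edgePoly (min e.1 e.2, max e.1 e.2) = -edgePoly e := by
  rcases le_total e.1 e.2 with h | h
  · left
    rw [min_eq_left h, max_eq_right h]
  · right
    rw [min_eq_right h, max_eq_left h]
    simp only [edgePoly]
    ring

lemma disjoint_weight_lt {n a b c d : ℕ} (hab : a < b) (hbc : b < c) (hcd : c < d) (hd : d < n) :
    (b - a) * (n - (b - a)) + (d - c) * (n - (d - c)) <
      (c - a) * (n - (c - a)) + (d - b) * (n - (d - b)) := by
  zify [hab.le, hcd.le, (hab.trans hbc).le, (hbc.trans hcd).le,
    show b - a ≤ n by omega, show d - c ≤ n by omega, show c - a ≤ n by omega,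
    show d - b ≤ n by omega]
  nlinarith [mul_pos (show (0 : ℤ) < c - b by omega) (show (0 : ℤ) < n - (d - a) by omega)]

lemma nested_weight_lt {n a b c d : ℕ} (hab : a < b) (hbc : b < c) (hcd : c < d) (hd : d < n) :
    (d - a) * (n - (d - a)) + (c - b) * (n - (c - b)) <
      (c - a) * (n - (c - a)) + (d - b) * (n - (d - b)) := by
  zify [(hab.trans (hbc.trans hcd)).le, hbc.le, (hab.trans hbc).le, (hbc.trans hcd).le,
    show d - a ≤ n by omega, show c - b ≤ n by omega, show c - a ≤ n by omega,
    show d - b ≤ n by omega]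
  nlinarith [mul_pos (show (0 : ℤ) < d - c by omega) (show (0 : ℤ) < b - a by omega)]

namespace DGraph

variable {n : ℕ}

lemma mdeg_cons (e : Fin n × Fin n) (Γ : DGraph n) (v : Fin n) :
    mdeg (e ::ₘ Γ) v = (if e.1 = v then 1 else 0) + (if e.2 = v then 1 else 0) + Γ.mdeg v := by
  simp only [mdeg, Multiset.countP_cons]
  ring

lemma ite_min_add_ite_max (x y v : Fin n) :
    ((if min x y = v then 1 else 0) + (if max x y = v then 1 else 0) : ℕ) =
      (if x = v then 1 else 0) + (if y = v then 1 else 0) := by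
  rcases le_total x y with h | h
  · rw [min_eq_left h, max_eq_right h]
  · rw [min_eq_right h, max_eq_left h, add_comm]

lemma loopless_cons {e : Fin n × Fin n} {Γ : DGraph n} :
    loopless (e ::ₘ Γ) ↔ e.1 ≠ e.2 ∧ Γ.loopless :=
  Multiset.forall_mem_cons

def span (e : Fin n × Fin n) : ℕ := (max e.1 e.2).val - (min e.1 e.2).val

lemma span_of_lt {i j : Fin n} (h : i < j) : span (i, j) = j - i := by
  simp only [span, max_eq_right h.le, min_eq_left h.le]

def potential (Γ : DGraph n) : ℕ := (Γ.map fun e => span e * (n - span e)).sum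

lemma potential_cons (e : Fin n × Fin n) (Γ : DGraph n) :
    potential (e ::ₘ Γ) = span e * (n - span e) + potential Γ := by
  simp [potential]

def disjointResolution (e f : Fin n × Fin n) (G : DGraph n) : DGraph n :=
  (min e.1 e.2, min f.1 f.2) ::ₘ (max e.1 e.2, max f.1 f.2) ::ₘ G

def nestedResolution (e f : Fin n × Fin n) (G : DGraph n) : DGraph n :=
  (min e.1 e.2, max f.1 f.2) ::ₘ (min f.1 f.2, max e.1 e.2) ::ₘ G

lemma XG_cons_cons_eq_or_eq_neg (e f : Fin n × Fin n) (G : DGraph n) :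
    XG (e ::ₘ f ::ₘ G) = XG (disjointResolution e f G) + XG (nestedResolution e f G) ∨
      XG (e ::ₘ f ::ₘ G) = -(XG (disjointResolution e f G) + XG (nestedResolution e f G)) := by
  have hp := edgePoly_plucker (min e.1 e.2) (min f.1 f.2) (max e.1 e.2) (max f.1 f.2)
  simp only [disjointResolution, nestedResolution, XG_cons]
  rcases edgePoly_min_max e with he | he <;> rcases edgePoly_min_max f with hf | hf <;>
    rw [he, hf] at hp
  · exact .inl (by linear_combination XG G * hp)
  · exact .inr (by linear_combination -XG G * hp)
  · exact .inr (by linear_combination -XG G * hp)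
  · exact .inl (by linear_combination XG G * hp)

lemma mdeg_disjointResolution (e f : Fin n × Fin n) (G : DGraph n) (v : Fin n) :
    mdeg (disjointResolution e f G) v = mdeg (e ::ₘ f ::ₘ G) v := by
  have he := ite_min_add_ite_max e.1 e.2 v
  have hf := ite_min_add_ite_max f.1 f.2 v
  simp only [disjointResolution, mdeg_cons]
  omega

lemma mdeg_nestedResolution (e f : Fin n × Fin n) (G : DGraph n) (v : Fin n) :
    mdeg (nestedResolution e f G) v = mdeg (e ::ₘ f ::ₘ G) v := by
  have he := ite_min_add_ite_max e.1 e.2 v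
  have hf := ite_min_add_ite_max f.1 f.2 v
  simp only [nestedResolution, mdeg_cons]
  omega

lemma potential_disjointResolution_lt {e f : Fin n × Fin n} (G : DGraph n)
    (hab : min e.1 e.2 < min f.1 f.2) (hbc : min f.1 f.2 < max e.1 e.2)
    (hcd : max e.1 e.2 < max f.1 f.2) :
    potential (disjointResolution e f G) < potential (e ::ₘ f ::ₘ G) := by
  simp only [disjointResolution, potential_cons, span_of_lt hab, span_of_lt hcd]
  have := disjoint_weight_lt hab hbc hcd (max f.1 f.2).isLt
  simp only [span]
  omega

lemma potential_nestedResolution_lt {e f : Fin n × Fin n} (G : DGraph n)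
    (hab : min e.1 e.2 < min f.1 f.2) (hbc : min f.1 f.2 < max e.1 e.2)
    (hcd : max e.1 e.2 < max f.1 f.2) :
    potential (nestedResolution e f G) < potential (e ::ₘ f ::ₘ G) := by
  simp only [nestedResolution, potential_cons, span_of_lt (hab.trans (hbc.trans hcd)),
    span_of_lt hbc]
  have := nested_weight_lt hab hbc hcd (max f.1 f.2).isLt
  simp only [span]
  omega

lemma loopless_disjointResolution {e f : Fin n × Fin n} {G : DGraph n}
    (hab : min e.1 e.2 < min f.1 f.2) (hcd : max e.1 e.2 < max f.1 f.2) (hG : G.loopless) :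
    loopless (disjointResolution e f G) :=
  loopless_cons.2 ⟨hab.ne, loopless_cons.2 ⟨hcd.ne, hG⟩⟩

lemma loopless_nestedResolution {e f : Fin n × Fin n} {G : DGraph n}
    (had : min e.1 e.2 < max f.1 f.2) (hbc : min f.1 f.2 < max e.1 e.2) (hG : G.loopless) :
    loopless (nestedResolution e f G) :=
  loopless_cons.2 ⟨had.ne, loopless_cons.2 ⟨hbc.ne, hG⟩⟩

lemma exists_eq_cons_cons_of_not_noncrossing {Γ : DGraph n} (h : ¬ Noncrossing Γ) :
    ∃ e f G, Γ = e ::ₘ f ::ₘ G ∧ min e.1 e.2 < min f.1 f.2 ∧ min f.1 f.2 < max e.1 e.2 ∧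
      max e.1 e.2 < max f.1 f.2 := by
  simp only [Noncrossing, not_forall, not_not] at h
  obtain ⟨e, he, f, hf, hef⟩ := h
  have hfe : f ≠ e := by
    rintro rfl
    rcases hef with ⟨h, -⟩ | ⟨h, -⟩ <;> exact h.false
  have hΓ : Γ = e ::ₘ f ::ₘ (Γ.erase e).erase f := by
    rw [Multiset.cons_erase ((Multiset.mem_erase_of_ne hfe).2 hf), Multiset.cons_erase he]
  rcases hef with hcross | hcross
  · exact ⟨e, f, _, hΓ, hcross⟩
  · exact ⟨f, e, _, hΓ.trans (Multiset.cons_swap e f _), hcross⟩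

end DGraph

/-- **Graphical straightening algorithm.** For any `w ∈ ℕⁿ`, every `X_Γ` with `Γ` of
multidegree `w` is a `ℤ`-linear combination of the `X_Δ` with `Δ` non-crossing of
multidegree `w`: the non-crossing variables generate, as an abelian group, the subgroup
generated by all `X_Γ` of multidegree `w`. -/
theorem straightening (n : ℕ) (w : Fin n → ℕ) (Γ : DGraph n)
    (hΓl : Γ.loopless) (hΓdeg : ∀ v, Γ.mdeg v = w v) :
    XG Γ ∈ AddSubgroup.closure
      {p | ∃ Δ : DGraph n, Δ.loopless ∧ (∀ v, Δ.mdeg v = w v) ∧ Noncrossing Δ ∧ p = XG Δ} := by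
  open DGraph in
  induction Γ using (measure potential).wf.induction with
  | _ Γ ih =>
    by_cases hnc : Noncrossing Γ
    · exact AddSubgroup.subset_closure ⟨Γ, hΓl, hΓdeg, hnc, rfl⟩
    obtain ⟨e, f, G, rfl, hab, hbc, hcd⟩ := exists_eq_cons_cons_of_not_noncrossing hnc
    have hG : loopless G := (loopless_cons.1 (loopless_cons.1 hΓl).2).2
    have h₁ := ih (disjointResolution e f G) (potential_disjointResolution_lt G hab hbc hcd)
      (loopless_disjointResolution hab hcd hG)
      fun v => (mdeg_disjointResolution e f G v).trans (hΓdeg v)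
    have h₂ := ih (nestedResolution e f G) (potential_nestedResolution_lt G hab hbc hcd)
      (loopless_nestedResolution (hab.trans (hbc.trans hcd)) hbc hG)
      fun v => (mdeg_nestedResolution e f G v).trans (hΓdeg v)
    rcases XG_cons_cons_eq_or_eq_neg e f G with h | h <;> rw [h]
    · exact add_mem h₁ h₂
    · exact neg_mem (add_mem h₁ h₂)
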